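/- arXiv:math/9806042 — 2 statements merged into one kernel-verified Lean document; each statement's English description precedes it below -/
import Mathlib

section
/- Let b, c be nonnegative integers with c ≤ b. If b is even and c is odd, then Δ'(x;b,c) = 0 for every rational number x. -/
open Finset

/-- Generalized binomial coefficient `C(x,k)`. -/
def gbinom (x : ℚ) (k : ℤ) : ℚ :=
  if 0 ≤ k then (∏ m ∈ Finset.range k.toNat, (x - m)) / (k.toNat.factorial : ℚ) else 0

/-- Shifted factorial `(a)_k` with integer index. -/
def poch (a : ℚ) (k : ℤ) : ℚ :=
  if 0 ≤ k then ∏ m ∈ Finset.range k.toNat, (a + m)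
  else 1 / ∏ m ∈ Finset.range (-k).toNat, (a - (m + 1))

/-- The matrix `M(x;b,c)`. -/
def Mmat (x : ℚ) (b c : ℕ) : Matrix (Fin (b + c)) (Fin (b + c)) ℚ := fun i j =>
  if (i : ℕ) < c then
    (if (j : ℕ) < b then gbinom (x + (j : ℕ)) ((i : ℕ) : ℤ)
     else gbinom (2 * x + (j : ℕ)) ((i : ℕ) : ℤ))
  else if (i : ℕ) < b then
    (if (j : ℕ) < c then 0
     else if (j : ℕ) < b then gbinom (x + (j : ℕ)) ((i : ℕ) : ℤ)
     else gbinom (2 * x + (j : ℕ)) ((i : ℕ) : ℤ))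
  else
    (if (j : ℕ) < c then 2 * gbinom (x + (j : ℕ)) (((i : ℕ) : ℤ) - (b : ℤ))
     else if (j : ℕ) < b then gbinom (x + (j : ℕ)) (((i : ℕ) : ℤ) - (b : ℤ))
     else 0)

/-- `Δ(x;b,c)`. -/
def Δdet (x : ℚ) (b c : ℕ) : ℚ := (Mmat x b c).det

/-- The matrix `M'(x;b,c)`; column index `j` of the paper is `c + j'`. -/
def M'mat (x : ℚ) (b c : ℕ) : Matrix (Fin b) (Fin b) ℚ := fun i j =>
  if c + (j : ℕ) < b then
    gbinom (x + (c : ℕ)) (((i : ℕ) : ℤ) - ((c : ℤ) + (j : ℕ)) + (c : ℤ))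
  else if (i : ℕ) < c then
    2 * gbinom (2 * x + (b : ℕ)) (((i : ℕ) : ℤ) - ((c : ℤ) + (j : ℕ)) + (b : ℤ))
  else
    gbinom (2 * x + (b : ℕ)) (((i : ℕ) : ℤ) - ((c : ℤ) + (j : ℕ)) + (b : ℤ))

/-- `Δ'(x;b,c)`. -/
def Δ'det (x : ℚ) (b c : ℕ) : ℚ := (M'mat x b c).det

/-!
Write `b = d + c`, so that `d` is odd too. Let `L(r) = (C(r, i - j))` be the lower-triangular
Toeplitz matrix of multiplication by `(1 + t)^r`, so that `L(r) L(s) = L(r + s)` by Vandermonde's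
identity, and let `N(r) = (C(r, d + i - j))` be its `c × c` block starting in row `d` (both are
`binomMat`). Take `W ≠ 0` in the kernel of `A = N(x + d) + N(-x - c) L(2x + b)` (`binomBlock`), put
`P = L(2x + b) W` and `Φ = L(x + d) W + L(-x - c) P`; then `A W = 0` says that `Φ` vanishes outside
its first `d` entries. The vector with first `d` entries `-Φ` and last `c` entries `W` is killed
by `M'(x; b, c)`: the first `d` columns of `M'` are those of `L(x + c)`, so they send `-Φ` to
`-L(x + c) Φ = -L(2x + b) W - P`, while the last `c` columns send `W` to `L(2x + b) W`, doubled in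
the first `c` rows, which are the only rows where `P` is nonzero.

Such a `W` exists because `A` intertwines matrices of different traces: `S A = A T L(2x + b)` for
the signed Pascal matrix `S = ((-1)^(d + i) C(i, j))` and the matrix `T` (`binomConj`) of
`p(t) ↦ (1 + t)^(c - 1) p(-t / (1 + t))` on polynomials of degree `< c`, which conjugates `L(r)`
into `L(-r)`; as `c` and `d` are odd, `tr S = -1` while `tr (T L(2x + b)) = 1`.
-/

open Matrix

lemma gbinom_of_neg {x : ℚ} {k : ℤ} (hk : k < 0) : gbinom x k = 0 := by
  rw [gbinom, if_neg hk.not_ge]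

lemma gbinom_eq_ringChoose (x : ℚ) (n : ℕ) : gbinom x n = Ring.choose x n := by
  rw [gbinom, if_pos (Int.natCast_nonneg n), Int.toNat_natCast, Ring.choose_eq_smul,
    ← Polynomial.aeval_eq_smeval, Polynomial.aeval_def, Polynomial.eval₂_eq_eval_map,
    descPochhammer_map, descPochhammer_eval_eq_prod_range, smul_eq_mul, div_eq_inv_mul]

lemma gbinom_eq_choose (m n : ℕ) : gbinom m n = m.choose n := by
  rw [gbinom_eq_ringChoose, Ring.choose_natCast]

lemma gbinom_zero_right (x : ℚ) : gbinom x 0 = 1 := by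
  simpa using gbinom_eq_ringChoose x 0

lemma gbinom_zero_left (k : ℤ) : gbinom 0 k = if k = 0 then 1 else 0 := by
  obtain hk | hk := lt_or_ge k 0
  · rw [gbinom_of_neg hk, if_neg hk.ne]
  · obtain ⟨n, rfl⟩ := Int.eq_ofNat_of_zero_le hk
    simp only [gbinom_eq_ringChoose, Ring.choose_zero_ite, Nat.cast_eq_zero]

lemma gbinom_eq_neg_one_zpow_mul (y : ℚ) (k : ℤ) :
    gbinom y k = (-1) ^ k * gbinom (k - y - 1) k := by
  obtain hk | hk := lt_or_ge k 0
  · rw [gbinom_of_neg hk, gbinom_of_neg hk, mul_zero]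
  · obtain ⟨n, rfl⟩ := Int.eq_ofNat_of_zero_le hk
    have h := Ring.choose_neg (-y) n
    rw [neg_neg] at h
    rw [gbinom_eq_ringChoose, gbinom_eq_ringChoose, h, zpow_natCast, Units.smul_def,
      Int.coe_negOnePow_natCast, zsmul_eq_mul]
    push_cast
    ring_nf

lemma sum_range_gbinom_mul_gbinom (x y : ℚ) (p : ℕ) (q : ℤ) {s : ℕ}
    (hs : ∀ l, s ≤ l → gbinom x (l - p) * gbinom y (q - l) = 0) :
    ∑ l ∈ range s, gbinom x (l - p) * gbinom y (q - l) = gbinom (x + y) (q - p) := by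
  set f : ℕ → ℚ := fun l => gbinom x (l - p) * gbinom y (q - l)
  have hvan : ∀ l : ℕ, ((l : ℤ) < p ∨ q < l) → f l = 0 := by
    rintro l (hl | hl)
    · simp only [f, gbinom_of_neg (sub_neg.mpr hl), zero_mul]
    · simp only [f, gbinom_of_neg (sub_neg.mpr hl), mul_zero]
  obtain hqp | hqp := lt_or_ge (q - p) 0
  · rw [gbinom_of_neg hqp]
    exact sum_eq_zero fun l _ => hvan l (by omega)
  obtain ⟨N, hN⟩ := Int.eq_ofNat_of_zero_le hqp
  have hwindow : Ico p (p + N + 1) ⊆ range (s + p + N + 1) := fun l hl => by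
    simp only [mem_Ico, mem_range] at hl ⊢; omega
  calc ∑ l ∈ range s, f l = ∑ l ∈ range (s + p + N + 1), f l :=
        sum_subset (range_subset_range.mpr (by omega)) fun l _ hls => hs l (by simpa using hls)
    _ = ∑ l ∈ Ico p (p + N + 1), f l :=
        (sum_subset hwindow fun l _ hl => hvan l (by simp only [mem_Ico] at hl; omega)).symm
    _ = ∑ j ∈ range (N + 1), Ring.choose x j * Ring.choose y (N - j) := by
        rw [sum_Ico_eq_sum_range, show p + N + 1 - p = N + 1 by omega]
        refine sum_congr rfl fun j hj => ?_
        have hjN : j ≤ N := by simpa [Nat.lt_succ_iff] using hj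
        simp only [f, ← gbinom_eq_ringChoose]
        congr 2 <;> push_cast <;> omega
    _ = gbinom (x + y) (q - p) := by
        rw [hN, gbinom_eq_ringChoose, Ring.add_choose_eq N (Commute.all x y),
          Nat.sum_antidiagonal_eq_sum_range_succ_mk]

lemma sum_fin_gbinom_mul_gbinom (x y : ℚ) (p : ℕ) (q : ℤ) {s : ℕ}
    (hs : ∀ l, s ≤ l → gbinom x (l - p) * gbinom y (q - l) = 0) :
    ∑ l : Fin s, gbinom x ((l : ℕ) - p) * gbinom y (q - (l : ℕ)) =
      gbinom (x + y) (q - p) := by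
  rw [Fin.sum_univ_eq_sum_range (fun l => gbinom x (l - p) * gbinom y (q - l)),
    sum_range_gbinom_mul_gbinom x y p q hs]

lemma gbinom_natCast_eq_zero_of_lt {m : ℕ} {k : ℤ} (h : (m : ℤ) < k) : gbinom m k = 0 := by
  lift k to ℕ using by omega
  rw [gbinom_eq_choose, Nat.choose_eq_zero_of_lt (by omega), Nat.cast_zero]

lemma sum_fin_gbinom_natCast_mul_gbinom_add (m : ℕ) (y : ℚ) (t : ℤ) {s : ℕ} (hm : m < s) :
    ∑ k : Fin s, gbinom m (k : ℕ) * gbinom y (t + (k : ℕ)) = gbinom (m + y) (t + m) := by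
  have hvan : ∀ k : ℕ, m < k → gbinom m k = 0 := fun k hk =>
    gbinom_natCast_eq_zero_of_lt (by omega)
  rw [Fin.sum_univ_eq_sum_range (fun k => gbinom m k * gbinom y (t + k)),
    ← sum_subset (range_subset_range.mpr hm) fun k _ hk => by
      rw [hvan k (by simpa using hk), zero_mul],
    ← sum_range_reflect]
  have hsymm := sum_range_gbinom_mul_gbinom (m : ℚ) y 0 (t + m) (s := m + 1) fun j hj => by
    rw [Nat.cast_zero, sub_zero, hvan j hj, zero_mul]
  simp only [Nat.cast_zero, sub_zero] at hsymm
  rw [← hsymm]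
  refine sum_congr rfl fun j hj => ?_
  have hjm : j ≤ m := Nat.lt_succ_iff.mp (mem_range.mp hj)
  rw [Nat.succ_sub_one, gbinom_eq_choose, gbinom_eq_choose, Nat.choose_symm hjm]
  congr 2
  omega

def binomMat (r : ℚ) (e m n : ℕ) : Matrix (Fin m) (Fin n) ℚ :=
  of fun i j => gbinom r ((e : ℤ) + (i : ℕ) - (j : ℕ))

lemma binomMat_mul (r s : ℚ) {m l n : ℕ} (h : m ≤ l) :
    binomMat r 0 m l * binomMat s 0 l n = binomMat (r + s) 0 m n := by
  ext i j
  simp only [binomMat, mul_apply, of_apply, Nat.cast_zero, zero_add]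
  simp_rw [mul_comm (gbinom r _)]
  rw [add_comm r, sum_fin_gbinom_mul_gbinom s r j i fun k hk => ?_]
  rw [gbinom_of_neg (show (i : ℤ) - k < 0 by omega), mul_zero]

lemma binomMat_zero_eq_one (n : ℕ) : binomMat 0 0 n n = 1 := by
  ext i j
  simp only [binomMat, of_apply, Nat.cast_zero, zero_add, gbinom_zero_left,
    one_apply, sub_eq_zero, Nat.cast_inj, Fin.val_inj]

def binomConj (c : ℕ) : Matrix (Fin c) (Fin c) ℚ :=
  of fun n k => (-1) ^ ((k : ℕ) : ℤ) * gbinom (c - 1 - (k : ℕ)) ((n : ℕ) - (k : ℕ))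

lemma binomConj_apply (c : ℕ) (n k : Fin c) :
    binomConj c n k =
      (-1) ^ ((n : ℕ) : ℤ) * gbinom ((n : ℕ) - c) ((n : ℕ) - (k : ℕ)) := by
  rw [binomConj, of_apply, gbinom_eq_neg_one_zpow_mul, ← mul_assoc, ← zpow_add₀ (by norm_num)]
  push_cast
  ring_nf

lemma binomConj_mul_binomMat (B : ℚ) (c : ℕ) :
    binomConj c * binomMat B 0 c c = binomMat (-B) 0 c c * binomConj c := by
  ext n m
  have hL : (binomConj c * binomMat B 0 c c) n m =
      (-1) ^ ((n : ℕ) : ℤ) * gbinom (B + ((n : ℕ) - c)) ((n : ℕ) - (m : ℕ)) := by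
    simp only [mul_apply, binomConj_apply, binomMat, of_apply, Nat.cast_zero, zero_add,
      mul_assoc, ← mul_sum]
    simp_rw [mul_comm (gbinom ((n : ℕ) - c : ℚ) _)]
    rw [sum_fin_gbinom_mul_gbinom B _ m n fun k hk => ?_]
    rw [gbinom_of_neg (show ((n : ℕ) : ℤ) - k < 0 by omega), mul_zero]
  have hR : (binomMat (-B) 0 c c * binomConj c) n m =
      (-1) ^ ((m : ℕ) : ℤ) * gbinom (c - 1 - (m : ℕ) - B) ((n : ℕ) - (m : ℕ)) := by
    simp only [mul_apply, binomConj, binomMat, of_apply, Nat.cast_zero, zero_add]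
    simp_rw [mul_left_comm (gbinom (-B) _), ← mul_sum, mul_comm (gbinom (-B) _)]
    rw [sub_eq_add_neg _ B, sum_fin_gbinom_mul_gbinom _ (-B) m n fun k hk => ?_]
    rw [gbinom_of_neg (show ((n : ℕ) : ℤ) - k < 0 by omega), mul_zero]
  rw [hL, hR, gbinom_eq_neg_one_zpow_mul (c - 1 - (m : ℕ) - B), ← mul_assoc,
    ← zpow_add₀ (by norm_num)]
  push_cast
  ring_nf

def signedPascal (d c : ℕ) : Matrix (Fin c) (Fin c) ℚ :=
  of fun m k => (-1) ^ ((d : ℤ) + (m : ℕ)) * gbinom (m : ℕ) (k : ℕ)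

lemma signedPascal_mul_binomMat (r : ℚ) (d c : ℕ) :
    signedPascal d c * binomMat r d c c = binomMat (d - c - r) d c c * binomConj c := by
  ext m n
  have hL : (signedPascal d c * binomMat r d c c) m n =
      (-1) ^ ((d : ℤ) + (m : ℕ)) *
        gbinom ((m : ℕ) + r) ((d : ℤ) + (m : ℕ) - (n : ℕ)) := by
    simp only [mul_apply, signedPascal, binomMat, of_apply, mul_assoc, ← mul_sum,
      add_sub_right_comm (d : ℤ)]
    rw [sum_fin_gbinom_natCast_mul_gbinom_add _ _ _ m.isLt]
  have hR : (binomMat (d - c - r) d c c * binomConj c) m n =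
      (-1) ^ ((n : ℕ) : ℤ) *
        gbinom (d - 1 - (n : ℕ) - r) ((d : ℤ) + (m : ℕ) - (n : ℕ)) := by
    simp only [mul_apply, binomConj, binomMat, of_apply]
    simp_rw [mul_left_comm (gbinom (d - c - r) _), ← mul_sum, mul_comm (gbinom (d - c - r) _)]
    rw [show (d : ℚ) - 1 - (n : ℕ) - r = (c - 1 - (n : ℕ)) + (d - c - r) by ring,
      show (d : ℤ) + (m : ℕ) - (n : ℕ) = ((d : ℤ) + (m : ℕ)) - (n : ℕ) by ring,
      sum_fin_gbinom_mul_gbinom _ _ n _ fun k hk => ?_]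
    have hn := n.isLt
    rw [show (c : ℚ) - 1 - (n : ℕ) = (c - 1 - (n : ℕ) : ℕ) by
        rw [Nat.cast_sub (show (n : ℕ) ≤ c - 1 by omega), Nat.cast_sub (show 1 ≤ c by omega),
          Nat.cast_one],
      gbinom_natCast_eq_zero_of_lt (show ((c - 1 - n : ℕ) : ℤ) < k - n by omega), zero_mul]
  rw [hL, hR, gbinom_eq_neg_one_zpow_mul (d - 1 - (n : ℕ) - r), ← mul_assoc,
    ← zpow_add₀ (by norm_num)]
  push_cast
  ring_nf

lemma trace_signedPascal {d c : ℕ} (hd : Odd d) (hc : Odd c) : (signedPascal d c).trace = -1 := by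
  simp only [trace, Matrix.diag, signedPascal, of_apply, gbinom_eq_choose,
    Nat.choose_self, Nat.cast_one, mul_one, ← Nat.cast_add, zpow_natCast, pow_add, ← mul_sum]
  rw [Fin.sum_univ_eq_sum_range (fun m => (-1 : ℚ) ^ m), neg_one_geom_sum, hd.neg_one_pow,
    if_neg (Nat.not_even_iff_odd.mpr hc), mul_one]

lemma trace_binomConj_mul_binomMat (B : ℚ) {c : ℕ} (hc : Odd c) :
    (binomConj c * binomMat B 0 c c).trace = 1 := by
  have hdiag : ∀ n : Fin c, (binomConj c * binomMat B 0 c c) n n = (-1) ^ (n : ℕ) := by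
    intro n
    rw [mul_apply, Fintype.sum_eq_single n fun k hkn => ?_]
    · simp [binomConj, binomMat, gbinom_zero_right]
    obtain hkn | hkn := lt_or_gt_of_ne (Fin.val_ne_of_ne hkn)
    · rw [binomMat, of_apply, gbinom_of_neg (by omega), mul_zero]
    · rw [binomConj, of_apply, gbinom_of_neg (by omega), mul_zero, zero_mul]
  simp only [trace, Matrix.diag, hdiag]
  rw [Fin.sum_univ_eq_sum_range (fun n => (-1 : ℚ) ^ n), neg_one_geom_sum,
    if_neg (Nat.not_even_iff_odd.mpr hc)]

lemma Matrix.det_eq_zero_of_mul_eq_mul_of_trace_ne {n K : Type*} [Fintype n] [DecidableEq n]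
    [Field K] {S A X : Matrix n n K} (hSA : S * A = A * X) (htr : S.trace ≠ X.trace) :
    A.det = 0 := by
  by_contra hA
  have hunit : IsUnit A.det := isUnit_iff_ne_zero.mpr hA
  refine htr ?_
  rw [← trace_conj ((isUnit_iff_isUnit_det A).mpr hunit) X, ← hSA,
    mul_nonsing_inv_cancel_right _ _ hunit]

def binomBlock (x : ℚ) (d c : ℕ) : Matrix (Fin c) (Fin c) ℚ :=
  binomMat (x + d) d c c + binomMat (-x - c) d c c * binomMat (2 * x + d + c) 0 c c

lemma det_binomBlock {d c : ℕ} (hd : Odd d) (hc : Odd c) (x : ℚ) :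
    (binomBlock x d c).det = 0 := by
  set B : ℚ := 2 * x + d + c
  have hLTL : binomMat B 0 c c * (binomConj c * binomMat B 0 c c) = binomConj c := by
    rw [binomConj_mul_binomMat, ← Matrix.mul_assoc, binomMat_mul _ _ le_rfl, add_neg_cancel,
      binomMat_zero_eq_one, Matrix.one_mul]
  have hsimilar : signedPascal d c * binomBlock x d c =
      binomBlock x d c * (binomConj c * binomMat B 0 c c) := by
    rw [binomBlock, Matrix.mul_add, Matrix.add_mul, ← Matrix.mul_assoc, signedPascal_mul_binomMat,
      signedPascal_mul_binomMat, show (d : ℚ) - c - (x + d) = -x - c by ring,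
      show (d : ℚ) - c - (-x - c) = x + d by ring, Matrix.mul_assoc _ (binomMat B 0 c c), hLTL,
      ← Matrix.mul_assoc, add_comm]
  refine Matrix.det_eq_zero_of_mul_eq_mul_of_trace_ne hsimilar ?_
  rw [trace_signedPascal hd hc, trace_binomConj_mul_binomMat B hc]
  norm_num

lemma binomMat_mulVec_apply_congr {r : ℚ} {e e' m m' n : ℕ} (v : Fin n → ℚ) {i : Fin m}
    {i' : Fin m'} (h : e + (i : ℕ) = e' + i') :
    (binomMat r e m n *ᵥ v) i = (binomMat r e' m' n *ᵥ v) i' := by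
  simp only [mulVec, dotProduct, binomMat, of_apply]
  congr! 4
  exact_mod_cast h

lemma binomMat_zero_mulVec {m n : ℕ} (v : Fin n → ℚ) (i : Fin m) :
    (binomMat 0 0 m n *ᵥ v) i = if h : (i : ℕ) < n then v ⟨i, h⟩ else 0 := by
  simp only [mulVec, dotProduct, binomMat, of_apply, Nat.cast_zero, zero_add,
    gbinom_zero_left, sub_eq_zero, Nat.cast_inj, ite_mul, one_mul, zero_mul]
  split_ifs with h
  · rw [Fintype.sum_eq_single ⟨i, h⟩ fun j hj => if_neg fun hij => hj (Fin.ext hij.symm),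
      if_pos rfl]
  · exact sum_eq_zero fun j _ => if_neg fun (hij : (i : ℕ) = j) => h (hij ▸ j.isLt)

section Kernel

variable (x : ℚ) (d c : ℕ) (W : Fin c → ℚ)

def phiVec : Fin (d + c) → ℚ :=
  binomMat (x + d) 0 (d + c) c *ᵥ W +
    binomMat (-x - c) 0 (d + c) c *ᵥ (binomMat (2 * x + d + c) 0 c c *ᵥ W)

lemma phiVec_natAdd (hW : binomBlock x d c *ᵥ W = 0) (m : Fin c) :
    phiVec x d c W (Fin.natAdd d m) = 0 := by
  have h : (d : ℕ) + m = 0 + (Fin.natAdd d m : ℕ) := by simp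
  rw [← Pi.zero_apply (M := fun _ => ℚ) m, ← hW, binomBlock, add_mulVec, ← mulVec_mulVec,
    phiVec, Pi.add_apply, Pi.add_apply, binomMat_mulVec_apply_congr _ h,
    binomMat_mulVec_apply_congr _ h]

lemma binomMat_mulVec_phiVec :
    binomMat (x + c) 0 (d + c) (d + c) *ᵥ phiVec x d c W =
      binomMat (2 * x + d + c) 0 (d + c) c *ᵥ W +
        binomMat 0 0 (d + c) c *ᵥ (binomMat (2 * x + d + c) 0 c c *ᵥ W) := by
  rw [phiVec, mulVec_add, mulVec_mulVec, mulVec_mulVec, binomMat_mul _ _ le_rfl,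
    binomMat_mul _ _ le_rfl]
  congr 3 <;> ring

lemma M'mat_castAdd (i : Fin (d + c)) (j : Fin d) :
    M'mat x (d + c) c i (Fin.castAdd c j) =
      binomMat (x + c) 0 (d + c) (d + c) i (Fin.castAdd c j) := by
  simp only [M'mat, binomMat, of_apply, Fin.val_castAdd]
  rw [if_pos (by omega)]
  congr 1
  push_cast
  ring

lemma M'mat_natAdd (i : Fin (d + c)) (k : Fin c) :
    M'mat x (d + c) c i (Fin.natAdd d k) =
      (if (i : ℕ) < c then 2 else 1) * binomMat (2 * x + d + c) 0 (d + c) c i k := by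
  simp only [M'mat, binomMat, of_apply, Fin.val_natAdd]
  rw [if_neg (by omega)]
  split_ifs <;> push_cast <;> ring_nf

lemma M'mat_mulVec_append (hW : binomBlock x d c *ᵥ W = 0) :
    M'mat x (d + c) c *ᵥ Fin.append (fun j => -phiVec x d c W (Fin.castAdd c j)) W = 0 := by
  set R := binomMat (2 * x + d + c) 0 (d + c) c
  have hhead : ∀ i, ∑ j : Fin d, M'mat x (d + c) c i (Fin.castAdd c j) *
      phiVec x d c W (Fin.castAdd c j) = (R *ᵥ W) i + (binomMat 0 0 (d + c) c *ᵥ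
        (binomMat (2 * x + d + c) 0 c c *ᵥ W)) i := by
    intro i
    rw [← Pi.add_apply, ← binomMat_mulVec_phiVec, mulVec, dotProduct, Fin.sum_univ_add]
    simp only [M'mat_castAdd, phiVec_natAdd x d c W hW, mul_zero, sum_const_zero, add_zero]
  ext i
  rw [mulVec, dotProduct, Fin.sum_univ_add]
  simp only [Fin.append_left, Fin.append_right, mul_neg, sum_neg_distrib, hhead, M'mat_natAdd]
  have htail : ∑ k, (if (i : ℕ) < c then 2 else 1) * R i k * W k =
      (if (i : ℕ) < c then 2 else 1) * (R *ᵥ W) i := by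
    simp only [mulVec, dotProduct, mul_assoc, mul_sum]
  rw [htail, binomMat_zero_mulVec, Pi.zero_apply]
  split_ifs with hi
  · rw [binomMat_mulVec_apply_congr W (i := ⟨i, hi⟩) (i' := i) rfl]
    ring
  · ring

end Kernel

lemma det_M'mat_eq_zero {d c : ℕ} (hd : Odd d) (hc : Odd c) (x : ℚ) :
    (M'mat x (d + c) c).det = 0 := by
  obtain ⟨W, hW0, hW⟩ := exists_mulVec_eq_zero_iff.mpr (det_binomBlock hd hc x)
  refine exists_mulVec_eq_zero_iff.mp ⟨_, fun h => hW0 ?_, M'mat_mulVec_append x d c W hW⟩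
  ext k
  simpa using congrFun h (Fin.natAdd d k)

/-- Theorem 2(i): `Δ'(x;b,c) = 0` if `b` is even and `c` is odd. -/
theorem delta'_vanishes (b c : ℕ) (hcb : c ≤ b) (hb : Even b) (hc : Odd c) (x : ℚ) :
    Δ'det x b c = 0 := by
  obtain ⟨d, rfl⟩ : ∃ d, b = d + c := ⟨b - c, by omega⟩
  have hd : Odd d := by grind
  exact det_M'mat_eq_zero hd hc x
end

section
/- Let b, c be even integers with 0 < c < b. Then ∑_{k=0}^{c-1} (1-c)_k · (1-b+c)_k · (1/2 - b/2)_k / ( k! · (3/2 - b/2)_k · (1-b)_k ) = 0, the sum being taken in ℚ (all denominator factors are nonzero for 0 ≤ k ≤ c-1). -/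
/-!
Put `n = c - 1` and `y = 1 - b`. Since `(-n)_k = (-1)^k k! C(n,k)`, `(y/2)_k / (y/2 + 1)_k =
y / (y + 2k)` and `(y + n + 1)_k / (y)_k = (y + k)_{n+1} / (y)_{n+1}`, the sum is
`y / (y)_{n+1}` times `∑ (-1)^k C(n,k) (y + k)_{n+1} / (y + 2k)`, i.e. `(-1)^n` times the `n`-th
forward difference at `0` of the kernel `k ↦ (y + k)_{n+1} / (y + 2k)`. Writing
`(y + k) / (y + 2k) = 1/2 + (y/2) / (y + 2k)` expresses the first difference of the kernel of
order `n + 1` through the kernels of order `n` at `y` and `y + 2` and two Pochhammer polynomials,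
whose `n`-th differences are explicit. Induction on `n` shows that the `n`-th difference of the
kernel is `n!` for even `n` and `0` for odd `n`; here `n` is odd because `c` is even.
-/

open Finset

open Polynomial fwdDiff

section Pochhammer

variable {S : Type*} [CommSemiring S]

theorem ascPochhammer_eval_mul_eval_add (x : S) (m n : ℕ) :
    (ascPochhammer S m).eval x * (ascPochhammer S n).eval (x + m) =
      (ascPochhammer S (m + n)).eval x := by
  rw [← ascPochhammer_mul, eval_mul, eval_comp, eval_add, eval_X, eval_natCast]

theorem ascPochhammer_succ_eval_left (n : ℕ) (x : S) :
    (ascPochhammer S (n + 1)).eval x = x * (ascPochhammer S n).eval (x + 1) := by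
  rw [ascPochhammer_succ_left, eval_mul, eval_X, eval_comp, eval_add, eval_X, eval_one]

theorem ascPochhammer_eval_mul_add (x : S) (n : ℕ) :
    (ascPochhammer S n).eval x * (x + n) = x * (ascPochhammer S n).eval (x + 1) := by
  rw [← ascPochhammer_succ_eval, ascPochhammer_succ_eval_left]

theorem ascPochhammer_eval_neg_natCast {R : Type*} [CommRing R] (n k : ℕ) :
    (ascPochhammer R k).eval (-(n : R)) = (-1) ^ k * k.factorial * n.choose k := by
  rw [ascPochhammer_eval_neg_eq_descPochhammer, descPochhammer_eval_eq_descFactorial,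
    Nat.descFactorial_eq_factorial_mul_choose]
  push_cast
  ring

end Pochhammer

section ForwardDifference

variable {R : Type*} [CommRing R]

theorem sum_range_neg_one_pow_mul_choose_mul (f : ℕ → R) (n : ℕ) :
    ∑ k ∈ range (n + 1), (-1) ^ k * n.choose k * f k = (-1) ^ n * (Δ_[1])^[n] f 0 := by
  rw [fwdDiff_iter_eq_sum_shift, mul_sum]
  refine sum_congr rfl fun k hk => ?_
  obtain ⟨j, rfl⟩ := Nat.exists_eq_add_of_le (Nat.lt_succ_iff.mp (mem_range.mp hk))
  simp only [zero_add, smul_eq_mul, mul_one, zsmul_eq_mul, Nat.add_sub_cancel_left]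
  have hsq : (-1 : R) ^ (j + j) = 1 := (Even.add_self j).neg_one_pow
  push_cast
  linear_combination (-(-1 : R) ^ k * (k + j).choose k * f k) * hsq

theorem fwdDiff_ascPochhammer_eval (z : R) (m : ℕ) :
    Δ_[1] (fun k : ℕ => (ascPochhammer R (m + 1)).eval (z + k)) =
      ((m + 1 : ℕ) : R) • fun k : ℕ => (ascPochhammer R m).eval (z + 1 + k) := by
  ext k
  simp only [fwdDiff, Pi.smul_apply, smul_eq_mul]
  rw [Nat.cast_succ, ← add_assoc, ascPochhammer_succ_eval, ascPochhammer_succ_eval_left,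
    add_right_comm z]
  push_cast
  ring

theorem fwdDiff_iter_ascPochhammer_eval (z : R) (n : ℕ) :
    (Δ_[1])^[n] (fun k : ℕ => (ascPochhammer R (n + 1)).eval (z + k)) 0 =
      (n + 1).factorial * (z + n) := by
  induction n generalizing z with
  | zero => simp
  | succ n ih =>
    rw [Function.iterate_succ_apply, fwdDiff_ascPochhammer_eval, fwdDiff_iter_const_smul,
      Pi.smul_apply, ih, smul_eq_mul, Nat.factorial_succ (n + 1)]
    push_cast
    ring

end ForwardDifference

section Watson

variable {K : Type*} [Field K] [CharZero K]

noncomputable def watsonKernel (y : K) (n k : ℕ) : K :=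
  (ascPochhammer K (n + 1)).eval (y + k) / (y + 2 * k)

/-- The decomposition comes from `(y + k) / (y + 2k) = 1/2 + (y/2) / (y + 2k)`. -/
theorem fwdDiff_watsonKernel (y : K) (n : ℕ) (hy : ∀ k : ℕ, y + 2 * k ≠ 0) :
    Δ_[1] (watsonKernel y (n + 1)) =
      (1 / 2 : K) • (fun k : ℕ => (ascPochhammer K (n + 1)).eval (y + 2 + k)) +
      (-1 / 2 : K) • (fun k : ℕ => (ascPochhammer K (n + 1)).eval (y + k)) +
      (y / 2) • watsonKernel (y + 2) n + (-(y / 2 + n + 1)) • watsonKernel y n := by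
  ext k
  have hk : y + 2 * k ≠ 0 := hy k
  have hk' : y + 2 + 2 * k ≠ 0 := fun h => hy (k + 1) (by push_cast; linear_combination h)
  simp only [fwdDiff, watsonKernel, Pi.add_apply, Pi.smul_apply, smul_eq_mul]
  rw [ascPochhammer_succ_eval _ (y + k), ascPochhammer_succ_eval_left _ (y + (k + 1 : ℕ)),
    show y + ((k + 1 : ℕ) : K) + 1 = y + 2 + k by push_cast; ring,
    show y + 2 * ((k + 1 : ℕ) : K) = y + 2 + 2 * k by push_cast; ring]
  field_simp
  push_cast
  ring

theorem fwdDiff_iter_watsonKernel (y : K) (n : ℕ) (hy : ∀ k : ℕ, y + 2 * k ≠ 0) :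
    (Δ_[1])^[n] (watsonKernel y n) 0 = if Even n then (n.factorial : K) else 0 := by
  induction n generalizing y with
  | zero =>
    simpa [watsonKernel] using div_self (by simpa using hy 0)
  | succ n ih =>
    have hy₂ : ∀ k : ℕ, y + 2 + 2 * k ≠ 0 := fun k h =>
      hy (k + 1) (by push_cast; linear_combination h)
    rw [Function.iterate_succ_apply, fwdDiff_watsonKernel y n hy]
    simp only [fwdDiff_iter_add, fwdDiff_iter_const_smul, Pi.add_apply, Pi.smul_apply,
      smul_eq_mul, fwdDiff_iter_ascPochhammer_eval, ih y hy, ih (y + 2) hy₂, Nat.even_add_one]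
    rw [Nat.factorial_succ]
    split_ifs <;> push_cast <;> ring

theorem watson_summand_eq (y : K) {n k : ℕ} (hk : k ≤ n) (hy : ∀ k : ℕ, y + 2 * k ≠ 0)
    (hyn : (ascPochhammer K (n + 1)).eval y ≠ 0) :
    (ascPochhammer K k).eval (-(n : K)) * (ascPochhammer K k).eval (y + (n + 1)) *
        (ascPochhammer K k).eval (y / 2) /
      (k.factorial * (ascPochhammer K k).eval (y / 2 + 1) * (ascPochhammer K k).eval y) =
      y / (ascPochhammer K (n + 1)).eval y * ((-1) ^ k * n.choose k * watsonKernel y n k) := by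
  have hhalf : (ascPochhammer K k).eval (y / 2) * (y + 2 * k) =
      y * (ascPochhammer K k).eval (y / 2 + 1) := by
    linear_combination 2 * ascPochhammer_eval_mul_add (y / 2) k
  have hshift : (ascPochhammer K (n + 1)).eval y * (ascPochhammer K k).eval (y + (n + 1)) =
      (ascPochhammer K k).eval y * (ascPochhammer K (n + 1)).eval (y + k) := by
    rw [← Nat.cast_succ, ascPochhammer_eval_mul_eval_add, add_comm,
      ← ascPochhammer_eval_mul_eval_add]
  have hhalf_ne : (ascPochhammer K k).eval (y / 2 + 1) ≠ 0 := by
    rw [Ne, ascPochhammer_eval_eq_zero_iff]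
    rintro ⟨j, -, hj⟩
    exact hy (j + 1) (by push_cast; linear_combination 2 * hj)
  have hy_ne : (ascPochhammer K k).eval y ≠ 0 := by
    rw [Ne, ascPochhammer_eval_eq_zero_iff] at hyn ⊢
    rintro ⟨j, hj, hjy⟩
    exact hyn ⟨j, by omega, hjy⟩
  have hden : (k.factorial : K) * (ascPochhammer K k).eval (y / 2 + 1) *
      (ascPochhammer K k).eval y ≠ 0 := by
    have := k.factorial_ne_zero
    positivity
  rw [ascPochhammer_eval_neg_natCast, watsonKernel, mul_div_assoc' ((-1 : K) ^ k * n.choose k),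
    div_mul_div_comm, div_eq_div_iff hden (mul_ne_zero hyn (hy k))]
  linear_combination ((-1) ^ k * k.factorial * n.choose k * (ascPochhammer K k).eval (y / 2) *
      (y + 2 * k)) * hshift + ((-1) ^ k * k.factorial * n.choose k * (ascPochhammer K k).eval y *
      (ascPochhammer K (n + 1)).eval (y + k)) * hhalf

theorem terminating_watson_sum (y : K) (n : ℕ) (hy : ∀ k : ℕ, y + 2 * k ≠ 0)
    (hyn : (ascPochhammer K (n + 1)).eval y ≠ 0) :
    ∑ k ∈ range (n + 1), (ascPochhammer K k).eval (-(n : K)) *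
        (ascPochhammer K k).eval (y + (n + 1)) * (ascPochhammer K k).eval (y / 2) /
      (k.factorial * (ascPochhammer K k).eval (y / 2 + 1) * (ascPochhammer K k).eval y) =
      if Even n then y * n.factorial / (ascPochhammer K (n + 1)).eval y else 0 := by
  rw [sum_congr rfl fun k hk => watson_summand_eq y (Nat.lt_succ_iff.mp (mem_range.mp hk)) hy hyn,
    ← mul_sum, sum_range_neg_one_pow_mul_choose_mul, fwdDiff_iter_watsonKernel y n hy]
  split_ifs with hn
  · rw [hn.neg_one_pow]
    ring
  · simp

end Watson

theorem poch_natCast (a : ℚ) (k : ℕ) : poch a k = (ascPochhammer ℚ k).eval a := by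
  rw [poch, if_pos (Int.natCast_nonneg k), Int.toNat_natCast]
  induction k with
  | zero => simp
  | succ k ih => rw [prod_range_succ, ih, ascPochhammer_succ_eval]

/-- Equation (3.78): the Watson-type `₃F₂` sum vanishes for even `b` and even
`c` with `0 < c < b`. -/
theorem watson_sum_vanishes (b c : ℕ) (hb : Even b) (hc : Even c) (h0 : 0 < c) (hcb : c < b) :
    ∑ k ∈ Finset.range c,
        poch (1 - (c : ℚ)) (k : ℤ) * poch (1 - (b : ℚ) + c) (k : ℤ) *
            poch (1 / 2 - (b : ℚ) / 2) (k : ℤ) /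
          ((Nat.factorial k : ℚ) * poch (3 / 2 - (b : ℚ) / 2) (k : ℤ) *
            poch (1 - (b : ℚ)) (k : ℤ)) = 0 := by
  obtain ⟨n, rfl⟩ := Nat.exists_eq_add_one.mpr h0
  have hy : ∀ k : ℕ, (1 - b : ℚ) + 2 * k ≠ 0 := fun k h => by
    have : b = 2 * k + 1 := by exact_mod_cast (by linear_combination -h : (b : ℚ) = 2 * k + 1)
    exact Nat.not_even_two_mul_add_one k (this ▸ hb)
  have hyn : (ascPochhammer ℚ (n + 1)).eval (1 - b : ℚ) ≠ 0 := by
    rw [Ne, ascPochhammer_eval_eq_zero_iff]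
    rintro ⟨j, hj, hjb⟩
    have : j + 1 = b := by exact_mod_cast (by linear_combination hjb : (j : ℚ) + 1 = b)
    omega
  have hsum := terminating_watson_sum (1 - b : ℚ) n hy hyn
  rw [if_neg (Nat.even_add_one.mp hc)] at hsum
  have hc' : (1 : ℚ) - (n + 1) = -n := by ring
  have hb₁ : (1 / 2 : ℚ) - b / 2 = (1 - b) / 2 := by ring
  have hb₃ : (3 / 2 : ℚ) - b / 2 = (1 - b) / 2 + 1 := by ring
  simpa only [poch_natCast, Nat.cast_add_one, hc', hb₁, hb₃] using hsum
end
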